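/- arXiv:1906.10949 — 2 statements merged into one kernel-verified Lean document; each statement's English description precedes it below -/
import Mathlib

section
/- There exist an integer n₀ ≥ 1 and a constant C > 0 (depending only on θ and the sequence (p_i)) such that the following holds: for all 0 ≤ t₁ ≤ t₂ ≤ 1 with δ = t₂ − t₁ and every integer n ≥ n₀, if (X_i)_{i≥1} and (Y_i)_{i≥1} are ℕ-valued random variables on a probability space, all 2∞ of them mutually independent, with X_i Poisson-distributed with parameter n t₁ p_i and Y_i Poisson-distributed with parameter n δ p_i, then the random variable D = Σ_{i≥1} ( n t₂ p_i · 1{X_i + Y_i = 0} − n t₁ p_i · 1{X_i = 0} ) (the series converges absolutely a.s. and D is square-integrable) satisfies Var(D) ≤ C · α(n) · δ^{θ/2}. -/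
/-!
The increment is `D = ∑ fᵢ` with `fᵢ = n t₂ pᵢ 1{Xᵢ + Yᵢ = 0} - n t₁ pᵢ 1{Xᵢ = 0}`, a series of
pairwise independent terms with `|fᵢ| ≤ n pᵢ`, so `Var D = ∑ Var fᵢ ≤ ∑ E fᵢ²`. With `a = n t₁ pᵢ`,
`b = n δ pᵢ` and `q = n pᵢ` one computes `E fᵢ² = b² e^{-a-b} + a² e^{-a} (1 - e^{-b})`, which is at
most `2 min(q, 1) min(δq, 1) ≤ 2 δ^{θ/2} min(q^{θ/2}, q²)`.

Since `α(2x)/α(x) → 2^θ`, for large `x` the counting function satisfies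
`K₁ α(x) ≤ α(2x) ≤ K₂ α(x)` with `2^{θ/2} < K₁` and `K₂ < 4`. Group the atoms into dyadic blocks
according to the size of `n pᵢ`: from one block to the next the number of atoms changes by a factor
between `K₁` and `K₂`, while the weight `(n pᵢ)^{θ/2}` resp. `(n pᵢ)²` changes by `2^{θ/2}` resp. `4`.
Hence `∑_{n pᵢ ≥ 1} (n pᵢ)^{θ/2}` and `∑_{n pᵢ < 1} (n pᵢ)²` are dominated by geometric series
times `α(n)`.
-/

open Filter Topology Real MeasureTheory ProbabilityTheory Finset

lemma sq_mul_exp_neg_le_one {x : ℝ} (hx : 0 ≤ x) : x ^ 2 * exp (-x) ≤ 1 := by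
  have hmax := mul_exp_neg_le_exp_neg_one (x / 2)
  have he : 2 * exp (-1) ≤ 1 := by
    rw [exp_neg, ← div_eq_mul_inv, div_le_one (exp_pos 1)]
    linarith [add_one_le_exp 1]
  have hsplit : x ^ 2 * exp (-x) = (2 * (x / 2 * exp (-(x / 2)))) ^ 2 := by
    rw [mul_pow, mul_pow, ← exp_nat_mul]; ring_nf
  rw [hsplit]
  calc (2 * (x / 2 * exp (-(x / 2)))) ^ 2 ≤ (2 * exp (-1)) ^ 2 := by gcongr
    _ ≤ 1 := by nlinarith [exp_pos (-1)]

lemma sq_mul_exp_neg_le_min_sq {x : ℝ} (hx : 0 ≤ x) : x ^ 2 * exp (-x) ≤ min x 1 ^ 2 := by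
  rcases le_total x 1 with h | h
  · rw [min_eq_left h]
    exact mul_le_of_le_one_right (sq_nonneg x) (exp_le_one_iff.2 (neg_nonpos.2 hx))
  · rw [min_eq_right h, one_pow]
    exact sq_mul_exp_neg_le_one hx

lemma one_sub_exp_neg_le_min (x : ℝ) : 1 - exp (-x) ≤ min x 1 :=
  le_min (by linarith [add_one_le_exp (-x)]) (by linarith [exp_pos (-x)])

lemma min_one_le_rpow {x s : ℝ} (hx : 0 ≤ x) (hs₀ : 0 ≤ s) (hs₁ : s ≤ 1) : min x 1 ≤ x ^ s := by
  rcases le_total x 1 with h | h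
  · exact (min_le_left x 1).trans (self_le_rpow_of_le_one hx h hs₁)
  · exact (min_le_right x 1).trans (one_le_rpow h hs₀)

lemma sq_mul_exp_neg_add_sq_mul_exp_neg_le {a b q : ℝ} (ha : 0 ≤ a) (hb : 0 ≤ b) (haq : a ≤ q)
    (hbq : b ≤ q) :
    b ^ 2 * exp (-a) * exp (-b) + a ^ 2 * exp (-a) * (1 - exp (-b)) ≤
      2 * (min q 1 * min b 1) := by
  have hea : exp (-a) ≤ 1 := exp_le_one_iff.2 (neg_nonpos.2 ha)
  have hmin_b : min b 1 ≤ min q 1 := min_le_min_right 1 hbq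
  have hb₀ : 0 ≤ min b 1 := le_min hb zero_le_one
  have hfirst : b ^ 2 * exp (-a) * exp (-b) ≤ min q 1 * min b 1 :=
    calc b ^ 2 * exp (-a) * exp (-b) ≤ b ^ 2 * exp (-b) := by
          rw [mul_right_comm]; exact mul_le_of_le_one_right (by positivity) hea
      _ ≤ min b 1 ^ 2 := sq_mul_exp_neg_le_min_sq hb
      _ ≤ min q 1 * min b 1 := by rw [sq]; exact mul_le_mul_of_nonneg_right hmin_b hb₀
  have hsecond : a ^ 2 * exp (-a) * (1 - exp (-b)) ≤ min q 1 * min b 1 :=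
    calc a ^ 2 * exp (-a) * (1 - exp (-b)) ≤ min a 1 ^ 2 * min b 1 :=
          mul_le_mul (sq_mul_exp_neg_le_min_sq ha) (one_sub_exp_neg_le_min b)
            (sub_nonneg.2 (exp_le_one_iff.2 (neg_nonpos.2 hb))) (sq_nonneg _)
      _ ≤ min q 1 * min b 1 := by
          gcongr
          calc min a 1 ^ 2 ≤ min a 1 := by nlinarith [min_le_right a 1, le_min ha zero_le_one]
            _ ≤ min q 1 := min_le_min_right 1 haq
  linarith

lemma min_mul_min_le_rpow_mul_min {q δ s : ℝ} (hq : 0 ≤ q) (hδ : 0 ≤ δ) (hδ₁ : δ ≤ 1)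
    (hs₀ : 0 ≤ s) (hs₁ : s ≤ 1) :
    min q 1 * min (δ * q) 1 ≤ δ ^ s * min (q ^ s) (q ^ 2) := by
  rw [mul_min_of_nonneg _ _ (rpow_nonneg hδ s)]
  refine le_min ?_ ?_
  · calc min q 1 * min (δ * q) 1 ≤ 1 * (δ * q) ^ s :=
          mul_le_mul (min_le_right q 1) (min_one_le_rpow (by positivity) hs₀ hs₁)
            (le_min (by positivity) zero_le_one) zero_le_one
      _ = δ ^ s * q ^ s := by rw [one_mul, mul_rpow hδ hq]
  · calc min q 1 * min (δ * q) 1 ≤ q * (δ * q) :=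
          mul_le_mul (min_le_left q 1) (min_le_left _ 1) (le_min (by positivity) zero_le_one) hq
      _ = δ * q ^ 2 := by ring
      _ ≤ δ ^ s * q ^ 2 := by gcongr; exact self_le_rpow_of_le_one hδ hδ₁ hs₁

lemma geom_sum_range_le_inv_one_sub {x : ℝ} (hx₀ : 0 ≤ x) (hx₁ : x < 1) (n : ℕ) :
    ∑ i ∈ range n, x ^ i ≤ (1 - x)⁻¹ := by
  simpa only [range_eq_Ico, pow_zero, one_div] using geom_sum_Ico_le_of_lt_one (m := 0) hx₀ hx₁

lemma sum_Ico_le_sum_mul_of_monotone {g c : ℕ → ℝ} {b : ℕ → ℕ} (hb : Monotone b) {M : ℕ}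
    (hc : ∀ k < M, 0 ≤ c k) (hg : ∀ k < M, ∀ i ∈ Ico (b k) (b (k + 1)), g i ≤ c k) :
    ∑ i ∈ Ico (b 0) (b M), g i ≤ ∑ k ∈ range M, (b (k + 1) : ℝ) * c k := by
  induction M with
  | zero => simp
  | succ M ih =>
    rw [← sum_Ico_consecutive _ (hb (Nat.zero_le M)) (hb M.le_succ), sum_range_succ]
    refine add_le_add (ih (fun k hk => hc k (by omega)) (fun k hk => hg k (by omega)))
      ((sum_le_card_nsmul _ _ _ (hg M M.lt_succ_self)).trans ?_)
    rw [nsmul_eq_mul, Nat.card_Ico]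
    gcongr
    · exact hc M M.lt_succ_self
    · exact_mod_cast Nat.sub_le _ _

lemma Nat.lt_ncard_iff_of_isLowerSet {S : Set ℕ} (hS : S.Finite) (hl : IsLowerSet S) {i : ℕ} :
    i < S.ncard ↔ i ∈ S := by
  constructor
  · intro hi
    by_contra hiS
    have hsub : S ⊆ Set.Iio i := fun j hj => lt_of_not_ge fun hij => hiS (hl hij hj)
    have := Set.ncard_le_ncard hsub (Set.finite_Iio i)
    rw [Set.ncard_Iio_nat] at this
    omega
  · intro hiS
    have := Set.ncard_le_ncard (s := Set.Iic i) (fun j hj => hl hj hiS) hS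
    rw [Set.ncard_Iic_nat] at this
    omega

section Doubling

variable {f : ℝ → ℝ} {K x₀ : ℝ}

lemma tendsto_two_mul_div_of_eq_rpow_mul {L : ℝ → ℝ} {θ : ℝ}
    (hL : Tendsto (fun x => L (2 * x) / L x) atTop (𝓝 1)) (hf : ∀ x > 0, f x = x ^ θ * L x) :
    Tendsto (fun x => f (2 * x) / f x) atTop (𝓝 (2 ^ θ)) := by
  have heq : ∀ᶠ x in atTop, (2 : ℝ) ^ θ * (L (2 * x) / L x) = f (2 * x) / f x := by
    filter_upwards [eventually_gt_atTop 0] with x hx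
    have hxθ : x ^ θ ≠ 0 := (rpow_pos_of_pos hx θ).ne'
    rw [hf x hx, hf (2 * x) (by positivity), mul_rpow zero_le_two hx.le, mul_assoc,
      mul_div_assoc, mul_div_mul_left _ _ hxθ]
  simpa using (hL.const_mul ((2 : ℝ) ^ θ)).congr' heq

lemma eventually_doubling_bounds {c lo hi : ℝ} (hf : ∀ x, 0 ≤ f x)
    (h : Tendsto (fun x => f (2 * x) / f x) atTop (𝓝 c)) (hlo₀ : 0 < lo) (hlo : lo < c)
    (hhi : c < hi) : ∀ᶠ x in atTop, lo * f x ≤ f (2 * x) ∧ f (2 * x) ≤ hi * f x := by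
  filter_upwards [h.eventually (lt_mem_nhds hlo), h.eventually (gt_mem_nhds hhi)] with x hl hh
  have hfx : 0 < f x := (hf x).lt_of_ne fun h0 => by rw [← h0, div_zero] at hl; linarith
  exact ⟨((lt_div_iff₀ hfx).1 hl).le, ((div_lt_iff₀ hfx).1 hh).le⟩

lemma pow_mul_le_of_mul_le_two_mul (hK : 0 ≤ K) (hx₀ : 0 ≤ x₀)
    (h : ∀ x ≥ x₀, K * f x ≤ f (2 * x)) {x : ℝ} (hx : x₀ ≤ x) (m : ℕ) :
    K ^ m * f x ≤ f (2 ^ m * x) := by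
  induction m with
  | zero => simp
  | succ m ih =>
    have hm : x₀ ≤ 2 ^ m * x :=
      hx.trans (le_mul_of_one_le_left (hx₀.trans hx) (one_le_pow₀ one_le_two))
    calc K ^ (m + 1) * f x = K * (K ^ m * f x) := by ring
      _ ≤ K * f (2 ^ m * x) := by gcongr
      _ ≤ f (2 ^ (m + 1) * x) := by rw [pow_succ', mul_assoc]; exact h _ hm

lemma mul_pow_le_mul_div_pow_of_mul_le_two_mul (hK : 0 < K) (hx₀ : 0 ≤ x₀)
    (h : ∀ x ≥ x₀, K * f x ≤ f (2 * x)) {x : ℝ} (hx : x₀ ≤ x) (m : ℕ) {w : ℝ} (hw : 0 ≤ w) :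
    f x * w ^ m ≤ f (2 ^ m * x) * (w / K) ^ m := by
  rw [div_pow, mul_div_assoc', le_div_iff₀ (pow_pos hK m)]
  calc f x * w ^ m * K ^ m = (K ^ m * f x) * w ^ m := by ring
    _ ≤ f (2 ^ m * x) * w ^ m := by
        gcongr; exact pow_mul_le_of_mul_le_two_mul hK.le hx₀ h hx m

lemma le_pow_mul_of_two_mul_le (hK : 0 ≤ K) (hx₀ : 0 ≤ x₀)
    (h : ∀ x ≥ x₀, f (2 * x) ≤ K * f x) {x : ℝ} (hx : x₀ ≤ x) (m : ℕ) :
    f (2 ^ m * x) ≤ K ^ m * f x := by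
  induction m with
  | zero => simp
  | succ m ih =>
    have hm : x₀ ≤ 2 ^ m * x :=
      hx.trans (le_mul_of_one_le_left (hx₀.trans hx) (one_le_pow₀ one_le_two))
    calc f (2 ^ (m + 1) * x) = f (2 * (2 ^ m * x)) := by rw [pow_succ', mul_assoc]
      _ ≤ K * f (2 ^ m * x) := h _ hm
      _ ≤ K * (K ^ m * f x) := by gcongr
      _ = K ^ (m + 1) * f x := by ring

end Doubling

/-- The paper's `α(x)`. -/
noncomputable def atomCount (p : ℕ → ℝ) (x : ℝ) : ℕ := Set.ncard {i : ℕ | p i ≥ 1 / x}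

section AtomCount

variable {p : ℕ → ℝ}

lemma lt_atomCount_iff (hp : Antitone p) (hp₀ : Tendsto p atTop (𝓝 0)) {x : ℝ} (hx : 0 < x)
    {i : ℕ} : i < atomCount p x ↔ 1 / x ≤ p i := by
  have hfin : {i : ℕ | p i ≥ 1 / x}.Finite := by
    have hev : ∀ᶠ i in atTop, p i < 1 / x := hp₀.eventually_lt_const (by positivity)
    rw [← Nat.cofinite_eq_atTop, eventually_cofinite] at hev
    simpa only [not_lt] using hev
  exact Nat.lt_ncard_iff_of_isLowerSet hfin fun i j hji hi => le_trans hi (hp hji)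

lemma mul_le_div_of_atomCount_le (hp : Antitone p) (hp₀ : Tendsto p atTop (𝓝 0)) {x y : ℝ}
    (hx : 0 < x) (hy : 0 ≤ y) {i : ℕ} (hi : atomCount p x ≤ i) : y * p i ≤ y / x := by
  have hpi : p i < 1 / x := lt_of_not_ge fun h => ((lt_atomCount_iff hp hp₀ hx).2 h).not_ge hi
  simpa only [mul_one_div] using mul_le_mul_of_nonneg_left hpi.le hy

lemma atomCount_mono (hp : Antitone p) (hp₀ : Tendsto p atTop (𝓝 0)) {x y : ℝ} (hx : 0 < x)
    (hxy : x ≤ y) : atomCount p x ≤ atomCount p y := by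
  by_contra! h
  have hi := (lt_atomCount_iff hp hp₀ hx).1 h
  exact (lt_irrefl _) ((lt_atomCount_iff hp hp₀ (hx.trans_le hxy)).2
    ((one_div_le_one_div_of_le hx hxy).trans hi))

lemma exists_le_atomCount_two_pow_mul (hp_pos : ∀ i, 0 < p i) (hp : Antitone p)
    (hp₀ : Tendsto p atTop (𝓝 0)) {y : ℝ} (hy : 0 < y) (N : ℕ) :
    ∃ M, N ≤ atomCount p (2 ^ M * y) := by
  obtain ⟨M, hM⟩ := pow_unbounded_of_one_lt (1 / (y * p N)) one_lt_two
  refine ⟨M, ((lt_atomCount_iff hp hp₀ (by positivity)).2 ?_).le⟩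
  have := hp_pos N
  rw [div_lt_iff₀ (by positivity)] at hM
  rw [div_le_iff₀ (by positivity)]
  linarith

lemma sum_range_atomCount_rpow_le_of_lt (hp : Antitone p) (hp₀ : Tendsto p atTop (𝓝 0))
    {s K x₀ z : ℝ} (hs : 0 ≤ s) (hK : 2 ^ s ≤ K) (hx₀ : 0 < x₀)
    (h : ∀ x ≥ x₀, K * atomCount p x ≤ atomCount p (2 * x)) (hz : z < x₀) (h2z : x₀ ≤ 2 * z)
    (m : ℕ) :
    ∑ i ∈ range (atomCount p z), (2 ^ (m + 1) * z * p i) ^ s ≤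
      (2 * x₀ * p 0) ^ s * atomCount p (2 ^ (m + 1) * z) := by
  have hp_nonneg : ∀ i, 0 ≤ p i := hp.le_of_tendsto hp₀
  have hz₀ : 0 < z := by linarith
  have hK₀ : 0 ≤ K := (rpow_nonneg zero_le_two s).trans hK
  have hA : 0 ≤ (2 * x₀ * p 0) ^ s := rpow_nonneg (by have := hp_nonneg 0; positivity) s
  have hterm : ∀ i ∈ range (atomCount p z),
      (2 ^ (m + 1) * z * p i) ^ s ≤ (2 * x₀ * p 0) ^ s * K ^ m := by
    intro i _
    have hpi : p i ≤ p 0 := hp (Nat.zero_le i)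
    have := hp_nonneg i
    have hbound : 2 ^ (m + 1) * z * p i ≤ 2 ^ m * (2 * x₀ * p 0) :=
      calc 2 ^ (m + 1) * z * p i ≤ 2 ^ (m + 1) * x₀ * p 0 := by gcongr
        _ = 2 ^ m * (2 * x₀ * p 0) := by ring
    calc (2 ^ (m + 1) * z * p i) ^ s ≤ (2 ^ m * (2 * x₀ * p 0)) ^ s :=
          rpow_le_rpow (by positivity) hbound hs
      _ = (2 * x₀ * p 0) ^ s * (2 ^ s) ^ m := by
          rw [mul_rpow (by positivity) (by have := hp_nonneg 0; positivity),
            ← rpow_pow_comm zero_le_two, mul_comm]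
      _ ≤ (2 * x₀ * p 0) ^ s * K ^ m := by gcongr
  have hcount : K ^ m * atomCount p z ≤ (atomCount p (2 ^ (m + 1) * z) : ℝ) := by
    have hz2z : (atomCount p z : ℝ) ≤ atomCount p (2 * z) := by
      exact_mod_cast atomCount_mono hp hp₀ hz₀ (by linarith)
    calc K ^ m * atomCount p z ≤ K ^ m * atomCount p (2 * z) := by gcongr
      _ ≤ atomCount p (2 ^ m * (2 * z)) :=
          pow_mul_le_of_mul_le_two_mul (f := fun x => (atomCount p x : ℝ)) hK₀ hx₀.le h h2z m
      _ = atomCount p (2 ^ (m + 1) * z) := by rw [← mul_assoc, ← pow_succ]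
  calc ∑ i ∈ range (atomCount p z), (2 ^ (m + 1) * z * p i) ^ s
      ≤ atomCount p z * ((2 * x₀ * p 0) ^ s * K ^ m) := by
        simpa using sum_le_card_nsmul _ _ _ hterm
    _ = (2 * x₀ * p 0) ^ s * (K ^ m * atomCount p z) := by ring
    _ ≤ (2 * x₀ * p 0) ^ s * atomCount p (2 ^ (m + 1) * z) := mul_le_mul_of_nonneg_left hcount hA

lemma atomCount_two_pow_mul_le {K x₀ z w : ℝ} (hK₀ : 0 < K) (hx₀ : 0 < x₀)
    (h : ∀ x ≥ x₀, K * atomCount p x ≤ atomCount p (2 * x)) (h2z : x₀ ≤ 2 * z) {k m : ℕ}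
    (hk : k ≤ m) (hw : 0 ≤ w) :
    (atomCount p (2 ^ (k + 1) * z) : ℝ) * (w * w ^ (m - k)) ≤
      w * (atomCount p (2 ^ (m + 1) * z) * (w / K) ^ (m - k)) := by
  have hx : x₀ ≤ 2 ^ (k + 1) * z := by
    have : (1 : ℝ) ≤ 2 ^ k := one_le_pow₀ one_le_two
    rw [pow_succ]; nlinarith
  have hy : (2 : ℝ) ^ (m - k) * (2 ^ (k + 1) * z) = 2 ^ (m + 1) * z := by
    rw [← mul_assoc, ← pow_add, show m - k + (k + 1) = m + 1 by omega]
  rw [mul_left_comm, ← hy]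
  exact mul_le_mul_of_nonneg_left (mul_pow_le_mul_div_pow_of_mul_le_two_mul
    (f := fun x => (atomCount p x : ℝ)) hK₀ hx₀.le h hx (m - k) hw) hw

lemma sum_Ico_atomCount_rpow_le (hp : Antitone p) (hp₀ : Tendsto p atTop (𝓝 0))
    {s K x₀ z : ℝ} (hs : 0 ≤ s) (hK : 2 ^ s < K) (hx₀ : 0 < x₀)
    (h : ∀ x ≥ x₀, K * atomCount p x ≤ atomCount p (2 * x)) (h2z : x₀ ≤ 2 * z) (m : ℕ) :
    ∑ i ∈ Ico (atomCount p z) (atomCount p (2 ^ (m + 1) * z)), (2 ^ (m + 1) * z * p i) ^ s ≤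
      2 ^ s / (1 - 2 ^ s / K) * atomCount p (2 ^ (m + 1) * z) := by
  have hp_nonneg : ∀ i, 0 ≤ p i := hp.le_of_tendsto hp₀
  have hz : 0 < z := by linarith
  have hK₀ : 0 < K := (rpow_pos_of_pos two_pos s).trans hK
  set w : ℝ := 2 ^ s
  set r : ℝ := w / K
  set y : ℝ := 2 ^ (m + 1) * z
  set b : ℕ → ℕ := fun k => atomCount p (2 ^ k * z)
  have hb : Monotone b := fun k l hkl =>
    atomCount_mono hp hp₀ (by positivity) (by gcongr; norm_num)
  have hb₀ : b 0 = atomCount p z := by simp [b]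
  have hg : ∀ k < m + 1, ∀ i ∈ Ico (b k) (b (k + 1)), (y * p i) ^ s ≤ w * w ^ (m - k) := by
    intro k hk i hi
    have hy : y / (2 ^ k * z) = 2 * 2 ^ (m - k) := by
      have h2 : (2 : ℝ) ^ (m + 1) = 2 ^ k * (2 * 2 ^ (m - k)) := by
        rw [← pow_succ', ← pow_add]; congr 1; omega
      simp only [y]; rw [h2]; field_simp
    calc (y * p i) ^ s ≤ (2 * 2 ^ (m - k)) ^ s := hy ▸ rpow_le_rpow
          (mul_nonneg (by positivity) (hp_nonneg i))
          (mul_le_div_of_atomCount_le hp hp₀ (by positivity) (by positivity) (mem_Ico.1 hi).1) hs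
      _ = w * w ^ (m - k) := by
          rw [mul_rpow zero_le_two (by positivity), ← rpow_pow_comm zero_le_two]
  rw [← hb₀]
  calc ∑ i ∈ Ico (b 0) (b (m + 1)), (y * p i) ^ s
      ≤ ∑ k ∈ range (m + 1), (b (k + 1) : ℝ) * (w * w ^ (m - k)) :=
        sum_Ico_le_sum_mul_of_monotone hb (fun _ _ => by positivity) hg
    _ ≤ ∑ k ∈ range (m + 1), w * (atomCount p y * r ^ (m + 1 - 1 - k)) :=
        sum_le_sum fun k hk => by
          rw [add_tsub_cancel_right]
          exact atomCount_two_pow_mul_le hK₀ hx₀ h h2z (by simp at hk; omega) (by positivity)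
    _ = w * atomCount p y * ∑ j ∈ range (m + 1), r ^ j := by
        rw [sum_range_reflect (fun j => w * (atomCount p y * r ^ j)), mul_sum]
        simp only [mul_assoc]
    _ ≤ w * atomCount p y * (1 - r)⁻¹ := by
        gcongr
        exact geom_sum_range_le_inv_one_sub (by positivity) ((div_lt_one hK₀).2 hK) _
    _ = w / (1 - r) * atomCount p y := by ring

lemma sum_range_atomCount_rpow_le (hp : Antitone p) (hp₀ : Tendsto p atTop (𝓝 0))
    {s K x₀ : ℝ} (hs : 0 ≤ s) (hK : 2 ^ s < K) (hx₀ : 0 < x₀)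
    (h : ∀ x ≥ x₀, K * atomCount p x ≤ atomCount p (2 * x)) :
    ∃ C, ∀ y ≥ x₀, ∑ i ∈ range (atomCount p y), (y * p i) ^ s ≤ C * atomCount p y := by
  refine ⟨(2 * x₀ * p 0) ^ s + 2 ^ s / (1 - 2 ^ s / K), fun y hy => ?_⟩
  obtain ⟨m, hm, hm'⟩ := exists_nat_pow_near ((one_le_div hx₀).2 hy) one_lt_two
  obtain ⟨z, rfl⟩ : ∃ z, y = 2 ^ (m + 1) * z := ⟨y / 2 ^ (m + 1), by field_simp⟩
  have hz : z < x₀ := by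
    rw [div_lt_iff₀ hx₀] at hm'
    nlinarith [pow_pos (two_pos (α := ℝ)) (m + 1)]
  have h2z : x₀ ≤ 2 * z := by
    rw [le_div_iff₀ hx₀, pow_succ] at hm
    nlinarith [pow_pos (two_pos (α := ℝ)) m]
  have hmono : atomCount p z ≤ atomCount p (2 ^ (m + 1) * z) :=
    atomCount_mono hp hp₀ (by linarith) (le_mul_of_one_le_left (by linarith) (one_le_pow₀ one_le_two))
  rw [← sum_range_add_sum_Ico _ hmono, add_mul]
  exact add_le_add (sum_range_atomCount_rpow_le_of_lt hp hp₀ hs hK.le hx₀ h hz h2z m)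
    (sum_Ico_atomCount_rpow_le hp hp₀ hs hK hx₀ h h2z m)

lemma sum_Ico_atomCount_sq_le (hp_pos : ∀ i, 0 < p i) (hp : Antitone p)
    (hp₀ : Tendsto p atTop (𝓝 0)) {K x₀ : ℝ} (hK₀ : 0 ≤ K) (hK : K < 4) (hx₀ : 0 < x₀)
    (h : ∀ x ≥ x₀, (atomCount p (2 * x) : ℝ) ≤ K * atomCount p x) :
    ∃ C, ∀ y ≥ x₀, ∀ N, ∑ i ∈ Ico (atomCount p y) N, (y * p i) ^ 2 ≤ C * atomCount p y := by
  refine ⟨K / (1 - K / 4), fun y hy N => ?_⟩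
  have hy₀ : 0 < y := hx₀.trans_le hy
  set b : ℕ → ℕ := fun k => atomCount p (2 ^ k * y)
  have hb : Monotone b := fun k l hkl =>
    atomCount_mono hp hp₀ (by positivity) (by gcongr; norm_num)
  obtain ⟨M, hM⟩ := exists_le_atomCount_two_pow_mul hp_pos hp hp₀ hy₀ N
  have hg : ∀ k < M, ∀ i ∈ Ico (b k) (b (k + 1)), (y * p i) ^ 2 ≤ (1 / 4) ^ k := by
    intro k _ i hi
    have hy : y / (2 ^ k * y) = (1 / 2) ^ k := by rw [one_div_pow]; field_simp
    calc (y * p i) ^ 2 ≤ ((1 / 2) ^ k) ^ 2 := pow_le_pow_left₀ (mul_nonneg hy₀.le (hp_pos i).le)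
          (hy ▸ mul_le_div_of_atomCount_le hp hp₀ (by positivity) hy₀.le (mem_Ico.1 hi).1) 2
      _ = (1 / 4) ^ k := by rw [← pow_mul, mul_comm, pow_mul]; norm_num
  have hcount : ∀ k, (b (k + 1) : ℝ) * (1 / 4) ^ k ≤ K * atomCount p y * (K / 4) ^ k := fun k =>
    calc (b (k + 1) : ℝ) * (1 / 4) ^ k ≤ K ^ (k + 1) * atomCount p y * (1 / 4) ^ k := by
          gcongr
          exact le_pow_mul_of_two_mul_le (f := fun x => (atomCount p x : ℝ)) hK₀ hx₀.le h hy _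
      _ = K * atomCount p y * (K / 4) ^ k := by
          rw [div_pow, div_pow, one_pow, pow_succ]; ring
  calc ∑ i ∈ Ico (atomCount p y) N, (y * p i) ^ 2
      ≤ ∑ i ∈ Ico (b 0) (b M), (y * p i) ^ 2 :=
        sum_le_sum_of_subset_of_nonneg (Ico_subset_Ico (by simp [b]) hM)
          fun _ _ _ => sq_nonneg _
    _ ≤ ∑ k ∈ range M, (b (k + 1) : ℝ) * (1 / 4) ^ k :=
        sum_Ico_le_sum_mul_of_monotone hb (fun _ _ => by positivity) hg
    _ ≤ ∑ k ∈ range M, K * atomCount p y * (K / 4) ^ k := sum_le_sum fun k _ => hcount k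
    _ = K * atomCount p y * ∑ k ∈ range M, (K / 4) ^ k := by rw [mul_sum]
    _ ≤ K * atomCount p y * (1 - K / 4)⁻¹ := by
        gcongr
        exact geom_sum_range_le_inv_one_sub (by positivity) (by linarith) M
    _ = K / (1 - K / 4) * atomCount p y := by ring

lemma exists_sum_min_rpow_sq_le (hp_pos : ∀ i, 0 < p i) (hp : Antitone p)
    (hp₀ : Tendsto p atTop (𝓝 0)) {θ s : ℝ} (hs : 0 ≤ s) (hsθ : s < θ) (hθ : θ < 2)
    (hratio : Tendsto (fun x => (atomCount p (2 * x) : ℝ) / atomCount p x) atTop (𝓝 (2 ^ θ))) :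
    ∃ x₀ > 0, ∃ C > 0, ∀ y ≥ x₀, ∀ N,
      ∑ i ∈ range N, min ((y * p i) ^ s) ((y * p i) ^ 2) ≤ C * atomCount p y := by
  obtain ⟨Klo, hKlo, hKlo'⟩ := exists_between (rpow_lt_rpow_of_exponent_lt one_lt_two hsθ)
  have h4 : (2 : ℝ) ^ θ < 4 := by
    have := rpow_lt_rpow_of_exponent_lt one_lt_two hθ
    rwa [rpow_two, show (2 : ℝ) ^ 2 = 4 by norm_num] at this
  obtain ⟨Khi, hKhi, hKhi'⟩ := exists_between h4
  obtain ⟨x₀, hx₀⟩ := (eventually_doubling_bounds (fun x => Nat.cast_nonneg _) hratio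
    ((rpow_pos_of_pos two_pos s).trans hKlo) hKlo' hKhi).exists_forall_of_atTop
  have hx₁ : (0 : ℝ) < max x₀ 1 := lt_max_of_lt_right one_pos
  obtain ⟨C₁, hC₁⟩ := sum_range_atomCount_rpow_le hp hp₀ hs hKlo hx₁
    fun x hx => (hx₀ x (le_of_max_le_left hx)).1
  obtain ⟨C₂, hC₂⟩ := sum_Ico_atomCount_sq_le hp_pos hp hp₀
    ((rpow_pos_of_pos two_pos θ).trans hKhi).le hKhi' hx₁
    fun x hx => (hx₀ x (le_of_max_le_left hx)).2
  refine ⟨max x₀ 1, hx₁, max (C₁ + C₂) 1, by positivity, fun y hy N => ?_⟩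
  set w : ℕ → ℝ := fun i => min ((y * p i) ^ s) ((y * p i) ^ 2)
  have hw : ∀ i, 0 ≤ w i := fun i =>
    le_min (rpow_nonneg (mul_nonneg (hx₁.trans_le hy).le (hp_pos i).le) s) (sq_nonneg _)
  set A := atomCount p y
  calc ∑ i ∈ range N, w i ≤ ∑ i ∈ range (max N A), w i :=
        sum_le_sum_of_subset_of_nonneg (range_subset_range.2 (le_max_left _ _)) fun i _ _ => hw i
    _ = ∑ i ∈ range A, w i + ∑ i ∈ Ico A (max N A), w i :=
        (sum_range_add_sum_Ico _ (le_max_right _ _)).symm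
    _ ≤ ∑ i ∈ range A, (y * p i) ^ s + ∑ i ∈ Ico A (max N A), (y * p i) ^ 2 :=
        add_le_add (sum_le_sum fun _ _ => min_le_left _ _) (sum_le_sum fun _ _ => min_le_right _ _)
    _ ≤ C₁ * A + C₂ * A := add_le_add (hC₁ y hy) (hC₂ y hy _)
    _ ≤ max (C₁ + C₂) 1 * A := by
        rw [← add_mul]; exact mul_le_mul_of_nonneg_right (le_max_left _ _) (Nat.cast_nonneg _)

end AtomCount

/-- The `i`-th summand of `D` as a function of `(Xᵢ, Yᵢ)`, with `c = n t₂ pᵢ`, `a = n t₁ pᵢ`. -/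
def incrementTerm (c a : ℝ) (x y : ℕ) : ℝ :=
  c * (if x + y = 0 then 1 else 0) - a * (if x = 0 then 1 else 0)

lemma abs_incrementTerm_le {n t₁ t₂ q : ℝ} (hn : 0 ≤ n) (hq : 0 ≤ q) (ht₁ : 0 ≤ t₁)
    (ht₁₂ : t₁ ≤ t₂) (ht₂ : t₂ ≤ 1) (x y : ℕ) :
    |incrementTerm (n * t₂ * q) (n * t₁ * q) x y| ≤ n * q := by
  have h₁ : 0 ≤ n * t₁ * q := by positivity
  have h₂ : n * t₁ * q ≤ n * t₂ * q := by gcongr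
  have h₃ : n * t₂ * q ≤ n * q := mul_le_mul_of_nonneg_right (mul_le_of_le_one_right hn ht₂) hq
  unfold incrementTerm
  split_ifs <;> rw [abs_le] <;> constructor <;> linarith

section Probability

variable {Ω : Type*} [MeasurableSpace Ω] {P : Measure Ω}

lemma memLp_tsum_of_abs_le [IsFiniteMeasure P] {f : ℕ → Ω → ℝ} (hf : ∀ i, Measurable (f i))
    {b : ℕ → ℝ} (hb : Summable b) (hfb : ∀ i ω, |f i ω| ≤ b i) (q : ENNReal) :
    MemLp (fun ω => ∑' i, f i ω) q P :=
  MemLp.of_bound (Measurable.tsum hf).aestronglyMeasurable (∑' i, b i)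
    (ae_of_all _ fun ω => tsum_of_norm_bounded hb.hasSum (hfb · ω))

lemma tendsto_variance_of_abs_le [IsProbabilityMeasure P] {X : ℕ → Ω → ℝ} {Y : Ω → ℝ} {B : ℝ}
    (hX : ∀ n, AEStronglyMeasurable (X n) P) (hY : MemLp Y 2 P) (hXB : ∀ n ω, |X n ω| ≤ B)
    (hlim : ∀ ω, Tendsto (fun n => X n ω) atTop (𝓝 (Y ω))) :
    Tendsto (fun n => variance (X n) P) atTop (𝓝 (variance Y P)) := by
  have hXL : ∀ n, MemLp (X n) 2 P := fun n => MemLp.of_bound (hX n) B (ae_of_all _ (hXB n))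
  simp_rw [variance_eq_sub (hXL _), variance_eq_sub hY, Pi.pow_apply]
  refine Tendsto.sub ?_ (Tendsto.pow ?_ 2)
  · refine tendsto_integral_of_dominated_convergence (fun _ => B ^ 2) (fun n => (hX n).pow 2)
      (integrable_const _) (fun n => ae_of_all _ fun ω => ?_) (ae_of_all _ fun ω => (hlim ω).pow 2)
    rw [norm_pow, Real.norm_eq_abs]
    exact pow_le_pow_left₀ (abs_nonneg _) (hXB n ω) 2
  · exact tendsto_integral_of_dominated_convergence (fun _ => B) hX (integrable_const _)
      (fun n => ae_of_all _ (hXB n)) (ae_of_all _ hlim)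

lemma hasSum_variance_tsum [IsProbabilityMeasure P] {f : ℕ → Ω → ℝ} (hf : ∀ i, Measurable (f i))
    (hind : Pairwise fun i j => IndepFun (f i) (f j) P) {b : ℕ → ℝ} (hb : Summable b)
    (hfb : ∀ i ω, |f i ω| ≤ b i) :
    HasSum (fun i => variance (f i) P) (variance (fun ω => ∑' i, f i ω) P) := by
  obtain ⟨ω₀⟩ := nonempty_of_isProbabilityMeasure P
  have hb₀ : ∀ i, 0 ≤ b i := fun i => (abs_nonneg _).trans (hfb i ω₀)
  have hpartial : ∀ N ω, |∑ i ∈ range N, f i ω| ≤ ∑' i, b i := fun N ω =>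
    (abs_sum_le_sum_abs _ _).trans ((sum_le_sum fun i _ => hfb i ω).trans
      (hb.sum_le_tsum _ fun i _ => hb₀ i))
  have hvar : ∀ N, ∑ i ∈ range N, variance (f i) P =
      variance (fun ω => ∑ i ∈ range N, f i ω) P := fun N => by
    rw [← IndepFun.variance_sum (fun i _ => MemLp.of_bound (hf i).aestronglyMeasurable (b i)
      (ae_of_all _ (hfb i))) (fun i _ j _ hij => hind hij)]
    congr 1; ext ω; simp
  rw [hasSum_iff_tendsto_nat_of_nonneg (fun i => variance_nonneg _ _)]
  simp_rw [hvar]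
  exact tendsto_variance_of_abs_le
    (fun N => (Finset.measurable_sum _ fun i _ => hf i).aestronglyMeasurable)
    (memLp_tsum_of_abs_le hf hb hfb 2) hpartial
    fun ω => (hb.of_norm_bounded (hfb · ω)).hasSum.tendsto_sum_nat

lemma pairwise_indepFun_comp_prodMk {ι β γ : Type*} [MeasurableSpace β] [MeasurableSpace γ]
    {X Y : ι → Ω → β} (hX : ∀ i, Measurable (X i)) (hY : ∀ i, Measurable (Y i))
    (h : iIndepFun (Sum.elim X Y) P) {g : ι → β × β → γ} (hg : ∀ i, Measurable (g i)) :
    Pairwise fun i j => IndepFun (fun ω => g i (X i ω, Y i ω)) (fun ω => g j (X j ω, Y j ω)) P := by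
  intro i j hij
  have hm : ∀ k, Measurable (Sum.elim X Y k) := by rintro (k | k); exacts [hX k, hY k]
  exact (h.indepFun_prodMk_prodMk hm (.inl i) (.inr i) (.inl j) (.inr j) (by simp [hij])
    (by simp) (by simp) (by simp [hij])).comp (hg i) (hg j)

lemma measurable_incrementTerm {X Y : Ω → ℕ} (hX : Measurable X) (hY : Measurable Y) (c a : ℝ) :
    Measurable fun ω => incrementTerm c a (X ω) (Y ω) :=
  (measurable_of_countable fun z : ℕ × ℕ => incrementTerm c a z.1 z.2).comp (hX.prodMk hY)

lemma integral_ite_eq_zero {Z : Ω → ℕ} (hZ : Measurable Z) :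
    ∫ ω, (if Z ω = 0 then (1 : ℝ) else 0) ∂P = P.real {ω | Z ω = 0} := by
  rw [← integral_indicator_one (s := {ω | Z ω = 0}) (hZ (measurableSet_singleton 0))]
  congr 1; ext ω; simp [Set.indicator_apply]

lemma incrementTerm_sq (c a : ℝ) (x y : ℕ) :
    incrementTerm c a x y ^ 2 =
      (c - a) ^ 2 * ((if x = 0 then 1 else 0) * (if y = 0 then 1 else 0)) +
        a ^ 2 * ((if x = 0 then 1 else 0) - (if x = 0 then 1 else 0) * (if y = 0 then 1 else 0)) := by
  simp only [incrementTerm]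
  split_ifs <;> (try omega) <;> ring

lemma integral_incrementTerm_sq [IsProbabilityMeasure P] {X Y : Ω → ℕ} (hX : Measurable X)
    (hY : Measurable Y) (hXY : IndepFun X Y P) (c a : ℝ) :
    ∫ ω, incrementTerm c a (X ω) (Y ω) ^ 2 ∂P =
      (c - a) ^ 2 * P.real {ω | X ω = 0} * P.real {ω | Y ω = 0} +
        a ^ 2 * P.real {ω | X ω = 0} * (1 - P.real {ω | Y ω = 0}) := by
  set u : ℕ → ℝ := fun x => if x = 0 then 1 else 0
  have hu : Measurable u := measurable_of_countable u
  have hint : ∀ g : ℕ × ℕ → ℝ, (∀ z, |g z| ≤ 1) → Integrable (fun ω => g (X ω, Y ω)) P :=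
    fun g hg => Integrable.of_bound ((measurable_of_countable g).comp
      (hX.prodMk hY)).aestronglyMeasurable 1 (ae_of_all _ fun ω => hg _)
  have hu₁ : ∀ x, |u x| ≤ 1 := fun x => by simp only [u]; split_ifs <;> simp
  have hiX : Integrable (fun ω => u (X ω)) P := hint (fun z => u z.1) fun z => hu₁ _
  have hiXY : Integrable (fun ω => u (X ω) * u (Y ω)) P := hint (fun z => u z.1 * u z.2)
    fun z => by rw [abs_mul]; exact mul_le_one₀ (hu₁ _) (abs_nonneg _) (hu₁ _)
  have hiDiff : Integrable (fun ω => u (X ω) - u (X ω) * u (Y ω)) P := hiX.sub hiXY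
  have hprod : ∫ ω, u (X ω) * u (Y ω) ∂P = P.real {ω | X ω = 0} * P.real {ω | Y ω = 0} :=
    ((hXY.comp hu hu).integral_fun_mul_eq_mul_integral (hu.comp hX).aestronglyMeasurable
      (hu.comp hY).aestronglyMeasurable).trans
      (congrArg₂ _ (integral_ite_eq_zero hX) (integral_ite_eq_zero hY))
  simp_rw [incrementTerm_sq]
  rw [integral_add (hiXY.const_mul _) (hiDiff.const_mul _), integral_const_mul,
    integral_const_mul, integral_sub hiX hiXY, hprod, integral_ite_eq_zero hX]
  ring

lemma integral_incrementTerm_sq_le [IsProbabilityMeasure P] {X Y : Ω → ℕ} (hX : Measurable X)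
    (hY : Measurable Y) (hXY : IndepFun X Y P) {a b c q δ s : ℝ} (ha : 0 ≤ a) (hc : c = a + b)
    (hb : b = δ * q) (hcq : c ≤ q) (hq : 0 ≤ q) (hδ : 0 ≤ δ) (hδ₁ : δ ≤ 1) (hs₀ : 0 ≤ s)
    (hs₁ : s ≤ 1) (hX₀ : P.real {ω | X ω = 0} = exp (-a))
    (hY₀ : P.real {ω | Y ω = 0} = exp (-b)) :
    ∫ ω, incrementTerm c a (X ω) (Y ω) ^ 2 ∂P ≤ 2 * δ ^ s * min (q ^ s) (q ^ 2) := by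
  have hb₀ : 0 ≤ b := hb ▸ mul_nonneg hδ hq
  rw [integral_incrementTerm_sq hX hY hXY, hX₀, hY₀, hc, add_sub_cancel_left]
  calc b ^ 2 * exp (-a) * exp (-b) + a ^ 2 * exp (-a) * (1 - exp (-b))
      ≤ 2 * (min q 1 * min b 1) :=
        sq_mul_exp_neg_add_sq_mul_exp_neg_le ha hb₀ (by linarith) (by linarith)
    _ ≤ 2 * (δ ^ s * min (q ^ s) (q ^ 2)) := by
        rw [hb]
        exact mul_le_mul_of_nonneg_left (min_mul_min_le_rpow_mul_min hq hδ hδ₁ hs₀ hs₁) zero_le_two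
    _ = 2 * δ ^ s * min (q ^ s) (q ^ 2) := by ring

lemma variance_tsum_incrementTerm_le [IsProbabilityMeasure P] {X Y : ℕ → Ω → ℕ}
    (hX : ∀ i, Measurable (X i)) (hY : ∀ i, Measurable (Y i)) (hind : iIndepFun (Sum.elim X Y) P)
    {p : ℕ → ℝ} (hp₀ : ∀ i, 0 ≤ p i) (hp : Summable p) {n t₁ t₂ s B : ℝ} (hn : 0 ≤ n)
    (ht₁ : 0 ≤ t₁) (ht₁₂ : t₁ ≤ t₂) (ht₂ : t₂ ≤ 1) (hs₀ : 0 ≤ s) (hs₁ : s ≤ 1)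
    (hX₀ : ∀ i, P.real {ω | X i ω = 0} = exp (-(n * t₁ * p i)))
    (hY₀ : ∀ i, P.real {ω | Y i ω = 0} = exp (-(n * (t₂ - t₁) * p i)))
    (hB : ∀ N, ∑ i ∈ range N, min ((n * p i) ^ s) ((n * p i) ^ 2) ≤ B) :
    variance (fun ω => ∑' i, incrementTerm (n * t₂ * p i) (n * t₁ * p i) (X i ω) (Y i ω)) P ≤
      2 * (t₂ - t₁) ^ s * B := by
  set f : ℕ → Ω → ℝ := fun i ω => incrementTerm (n * t₂ * p i) (n * t₁ * p i) (X i ω) (Y i ω)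
  have hf : ∀ i, Measurable (f i) := fun i => measurable_incrementTerm (hX i) (hY i) _ _
  have hmoment : ∀ i, ∫ ω, f i ω ^ 2 ∂P ≤
      2 * (t₂ - t₁) ^ s * min ((n * p i) ^ s) ((n * p i) ^ 2) := fun i =>
    integral_incrementTerm_sq_le (b := n * (t₂ - t₁) * p i) (hX i) (hY i)
      (hind.indepFun Sum.inl_ne_inr) (by have := hp₀ i; positivity) (by ring) (by ring)
      (mul_le_mul_of_nonneg_right (mul_le_of_le_one_right hn ht₂) (hp₀ i))
      (mul_nonneg hn (hp₀ i)) (by linarith) (by linarith) hs₀ hs₁ (hX₀ i) (hY₀ i)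
  have hsum := hasSum_variance_tsum hf
    (pairwise_indepFun_comp_prodMk hX hY hind (g := fun i z =>
      incrementTerm (n * t₂ * p i) (n * t₁ * p i) z.1 z.2) fun i => measurable_of_countable _)
    (hp.mul_left n) fun i ω => abs_incrementTerm_le hn (hp₀ i) ht₁ ht₁₂ ht₂ _ _
  refine le_of_tendsto' hsum.tendsto_sum_nat fun N => ?_
  calc ∑ i ∈ range N, variance (f i) P
      ≤ ∑ i ∈ range N, 2 * (t₂ - t₁) ^ s * min ((n * p i) ^ s) ((n * p i) ^ 2) :=
        sum_le_sum fun i _ =>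
          (variance_le_expectation_sq (hf i).aestronglyMeasurable).trans (hmoment i)
    _ ≤ 2 * (t₂ - t₁) ^ s * B := by
        rw [← mul_sum]
        exact mul_le_mul_of_nonneg_left (hB N)
          (mul_nonneg zero_le_two (rpow_nonneg (sub_nonneg.2 ht₁₂) s))

end Probability

/-- Lemma 2.3: variance bound for the increment of the Poissonized scaled missing mass
process. There exist `n₀ ≥ 1` and `C > 0` such that for all `0 ≤ t₁ ≤ t₂ ≤ 1` with
`δ = t₂ − t₁` and `n ≥ n₀`, if `X_i ~ Poisson(n t₁ p_i)` and `Y_i ~ Poisson(n δ p_i)` are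
all mutually independent, then
`D = ∑_i (n t₂ p_i 1{X_i + Y_i = 0} − n t₁ p_i 1{X_i = 0})` converges absolutely a.s.,
is square-integrable, and `Var(D) ≤ C α(n) δ^{θ/2}`. -/
theorem missing_mass_increment_variance_bound
    (p : ℕ → ℝ) (hp_pos : ∀ i, 0 < p i) (hp_mono : Antitone p)
    (hp_sum : ∑' i, p i = 1)
    (θ : ℝ) (hθ : θ ∈ Set.Ioc (0 : ℝ) 1)
    (L : ℝ → ℝ)
    (hL : ∀ c > (0 : ℝ), Tendsto (fun x => L (c * x) / L x) atTop (𝓝 1))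
    (hα : ∀ x > (0 : ℝ), ((Set.ncard {i : ℕ | p i ≥ 1 / x} : ℝ)) = x ^ θ * L x) :
    ∃ n₀ : ℕ, 1 ≤ n₀ ∧ ∃ C > (0 : ℝ),
      ∀ t₁ t₂ : ℝ, 0 ≤ t₁ → t₁ ≤ t₂ → t₂ ≤ 1 → ∀ n : ℕ, n₀ ≤ n →
      ∀ (Ω : Type) (_ : MeasurableSpace Ω) (P : Measure Ω), IsProbabilityMeasure P →
      ∀ X Y : ℕ → Ω → ℕ, (∀ i, Measurable (X i)) → (∀ i, Measurable (Y i)) →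
      iIndepFun (Sum.elim X Y) P →
      (∀ i, ∀ k : ℕ, (P {ω | X i ω = k}).toReal =
        Real.exp (-((n : ℝ) * t₁ * p i)) * ((n : ℝ) * t₁ * p i) ^ k / k.factorial) →
      (∀ i, ∀ k : ℕ, (P {ω | Y i ω = k}).toReal =
        Real.exp (-((n : ℝ) * (t₂ - t₁) * p i)) *
          ((n : ℝ) * (t₂ - t₁) * p i) ^ k / k.factorial) →
      ∀ D : Ω → ℝ,
      (∀ ω, D ω = ∑' i, ((n : ℝ) * t₂ * p i * (if X i ω + Y i ω = 0 then 1 else 0)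
          - (n : ℝ) * t₁ * p i * (if X i ω = 0 then 1 else 0))) →
      ((∀ᵐ ω ∂P, Summable fun i =>
          |(n : ℝ) * t₂ * p i * (if X i ω + Y i ω = 0 then 1 else 0)
            - (n : ℝ) * t₁ * p i * (if X i ω = 0 then 1 else 0)|) ∧
        MemLp D 2 P ∧
        variance D P ≤ C * ((Set.ncard {i : ℕ | p i ≥ 1 / (n : ℝ)} : ℝ))
          * (t₂ - t₁) ^ (θ / 2)) := by
  obtain ⟨hθ₀, hθ₁⟩ := hθ
  have hp : Summable p := by
    by_contra h
    rw [tsum_eq_zero_of_not_summable h] at hp_sum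
    exact zero_ne_one hp_sum
  obtain ⟨x₀, -, C, hC, hweights⟩ := exists_sum_min_rpow_sq_le hp_pos hp_mono
    hp.tendsto_atTop_zero (half_pos hθ₀).le (half_lt_self hθ₀) (by linarith)
    (tendsto_two_mul_div_of_eq_rpow_mul (hL 2 two_pos) hα)
  refine ⟨max 1 ⌈x₀⌉₊, le_max_left _ _, 2 * C, by positivity, ?_⟩
  intro t₁ t₂ ht₁ ht₁₂ ht₂ n hn Ω _ P _ X Y hX hY hind hXd hYd D hD
  have hx₀n : x₀ ≤ n := (Nat.le_ceil x₀).trans (by exact_mod_cast (le_max_right _ _).trans hn)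
  have hfb : ∀ i ω, |incrementTerm (n * t₂ * p i) (n * t₁ * p i) (X i ω) (Y i ω)| ≤ n * p i :=
    fun i ω => abs_incrementTerm_le n.cast_nonneg (hp_pos i).le ht₁ ht₁₂ ht₂ _ _
  obtain rfl : D = fun ω => ∑' i, incrementTerm (n * t₂ * p i) (n * t₁ * p i) (X i ω) (Y i ω) :=
    funext hD
  have hnp : Summable fun i => (n : ℝ) * p i := hp.mul_left (n : ℝ)
  refine ⟨ae_of_all _ fun ω => hnp.of_nonneg_of_le (fun _ => abs_nonneg _) (hfb · ω),
    memLp_tsum_of_abs_le (fun i => measurable_incrementTerm (hX i) (hY i) _ _) hnp hfb 2, ?_⟩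
  calc variance _ P ≤ 2 * (t₂ - t₁) ^ (θ / 2) * (C * atomCount p n) :=
        variance_tsum_incrementTerm_le hX hY hind (fun i => (hp_pos i).le) hp n.cast_nonneg ht₁
          ht₁₂ ht₂ (by positivity) (by linarith) (fun i => by simpa [measureReal_def] using hXd i 0)
          (fun i => by simpa [measureReal_def] using hYd i 0) (hweights n hx₀n)
    _ = 2 * C * atomCount p n * (t₂ - t₁) ^ (θ / 2) := by ring
end

section
/- Let 0 < τ ≤ t, and let (X_k)_{k≥1} and (Y_k)_{k≥1} be ℕ-valued random variables, all mutually independent, with X_k Poisson-distributed with parameter p_k τ and Y_k Poisson-distributed with parameter p_k (t − τ). Set U_τ = Σ_{k≥1} 1{X_k is odd} and U_t = Σ_{k≥1} 1{X_k + Y_k is odd} (both series converge a.s. and define square-integrable random variables). Then Cov(U_τ, U_t) = (1/4) Σ_{k≥1} ( e^{−2 p_k (t − τ)} − e^{−2 p_k (t + τ)} ). -/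
/-!
Let `A_k = {X_k odd}` and `B_k = {X_k + Y_k odd}`, so that `U_τ` and `U_t` count the events
`A_k` and `B_k` that occur. Counting in `ℝ≥0∞`, monotone convergence gives
`E[U_τ U_t] = ∑_j ∑_k P(A_j ∩ B_k)`. Events of different urns are independent, so the
off-diagonal terms are `P(A_j) P(B_k)` and cancel against `E[U_τ] E[U_t]`; since
`∑_k P(A_k) ≤ τ` and `∑_k P(B_k) ≤ t`, everything is finite, the series converge a.s. and
`Cov(U_τ, U_t) = ∑_k Cov(1_{A_k}, 1_{B_k})`. A Poisson(`λ`) variable is odd with probability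
`(1 - e^{-2λ}) / 2`, which evaluates each term.
-/

open Filter Topology Real MeasureTheory ProbabilityTheory
open scoped ENNReal Nat

theorem ENNReal.tsum_tsum_add_tsum_mul_of_offDiag {α : Type*} {f : α → α → ℝ≥0∞}
    {a b : α → ℝ≥0∞} (h : ∀ j k, j ≠ k → f j k = a j * b k) :
    ∑' j, ∑' k, f j k + ∑' j, a j * b j = ∑' j, f j j + (∑' j, a j) * ∑' k, b k := by
  classical
  have hrow : ∀ j, ∑' k, f j k + a j * b j = f j j + ∑' k, a j * b k := fun j => by
    have hoff : ∑' k, (if k = j then 0 else f j k) = ∑' k, if k = j then 0 else a j * b k :=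
      tsum_congr fun k => by split_ifs with hkj <;> [rfl; exact h j k (Ne.symm hkj)]
    rw [ENNReal.tsum_eq_add_tsum_ite j, ENNReal.tsum_eq_add_tsum_ite (f := fun k => a j * b k) j,
      hoff, add_right_comm, add_assoc]
  simp_rw [← ENNReal.tsum_add, hrow, ENNReal.tsum_add, ENNReal.tsum_mul_left,
    ENNReal.tsum_mul_right]

section EventCount

variable {Ω : Type*} {v w : ℕ → Set Ω}

noncomputable def eventCount (v : ℕ → Set Ω) (ω : Ω) : ℝ≥0∞ := ∑' k, (v k).indicator 1 ω

/-- Where the real series diverges, both sides are `0`. -/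
theorem toReal_eventCount (v : ℕ → Set Ω) (ω : Ω) :
    (eventCount v ω).toReal = ∑' k, (v k).indicator (1 : Ω → ℝ) ω := by
  rw [eventCount, ENNReal.tsum_toReal_eq fun k => by by_cases h : ω ∈ v k <;> simp [h]]
  exact tsum_congr fun k => by by_cases h : ω ∈ v k <;> simp [h]

variable [MeasurableSpace Ω] {P : Measure Ω}

theorem measurable_eventCount (hv : ∀ k, MeasurableSet (v k)) : Measurable (eventCount v) :=
  Measurable.tsum fun k => measurable_one.indicator (hv k)

theorem lintegral_eventCount (hv : ∀ k, MeasurableSet (v k)) :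
    ∫⁻ ω, eventCount v ω ∂P = ∑' k, P (v k) := by
  simp_rw [eventCount, lintegral_tsum fun k => (measurable_one.indicator (hv k)).aemeasurable,
    lintegral_indicator_one (hv _)]

theorem lintegral_eventCount_mul (hv : ∀ k, MeasurableSet (v k))
    (hw : ∀ k, MeasurableSet (w k)) :
    ∫⁻ ω, eventCount v ω * eventCount w ω ∂P = ∑' j, ∑' k, P (v j ∩ w k) := by
  have hprod : ∀ ω, eventCount v ω * eventCount w ω
      = ∑' j, ∑' k, (v j ∩ w k).indicator 1 ω := fun ω => by
    rw [eventCount, eventCount, ← ENNReal.tsum_mul_right]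
    simp_rw [← ENNReal.tsum_mul_left]
    exact tsum_congr fun j => tsum_congr fun k => (congrFun Set.inter_indicator_one ω).symm
  simp_rw [hprod]
  rw [lintegral_tsum fun j => (Measurable.tsum fun k =>
    measurable_one.indicator ((hv j).inter (hw k))).aemeasurable]
  simp_rw [lintegral_tsum fun k => (measurable_one.indicator ((hv _).inter (hw k))).aemeasurable,
    lintegral_indicator_one ((hv _).inter (hw _))]

theorem lintegral_eventCount_mul_add (hv : ∀ k, MeasurableSet (v k))
    (hw : ∀ k, MeasurableSet (w k)) (hvw : ∀ j k, j ≠ k → P (v j ∩ w k) = P (v j) * P (w k)) :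
    ∫⁻ ω, eventCount v ω * eventCount w ω ∂P + ∑' k, P (v k) * P (w k)
      = ∑' k, P (v k ∩ w k) + (∑' k, P (v k)) * ∑' k, P (w k) := by
  rw [lintegral_eventCount_mul hv hw]
  exact ENNReal.tsum_tsum_add_tsum_mul_of_offDiag hvw

theorem tsum_measure_inter_ne_top (hv_sum : ∑' k, P (v k) ≠ ∞) : ∑' k, P (v k ∩ w k) ≠ ∞ :=
  ne_top_of_le_ne_top hv_sum (ENNReal.tsum_le_tsum fun _ => measure_mono Set.inter_subset_left)

theorem lintegral_eventCount_mul_ne_top (hv : ∀ k, MeasurableSet (v k))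
    (hw : ∀ k, MeasurableSet (w k)) (hvw : ∀ j k, j ≠ k → P (v j ∩ w k) = P (v j) * P (w k))
    (hv_sum : ∑' k, P (v k) ≠ ∞) (hw_sum : ∑' k, P (w k) ≠ ∞) :
    ∫⁻ ω, eventCount v ω * eventCount w ω ∂P ≠ ∞ :=
  ne_top_of_le_ne_top
    (ENNReal.add_ne_top.2 ⟨tsum_measure_inter_ne_top hv_sum, ENNReal.mul_ne_top hv_sum hw_sum⟩)
    (le_self_add.trans (lintegral_eventCount_mul_add hv hw hvw).le)

theorem tsum_measure_ne_top_of_measureReal_le [IsFiniteMeasure P] {q : ℕ → ℝ}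
    (hle : ∀ k, P.real (v k) ≤ q k) (hq : Summable q) : ∑' k, P (v k) ≠ ∞ := by
  rw [tsum_congr fun k => (ofReal_measureReal (μ := P) (s := v k)).symm,
    ← ENNReal.ofReal_tsum_of_nonneg (fun _ => measureReal_nonneg)
      (.of_nonneg_of_le (fun _ => measureReal_nonneg) hle hq)]
  exact ENNReal.ofReal_ne_top

theorem ae_eventCount_lt_top (hv : ∀ k, MeasurableSet (v k)) (hv_sum : ∑' k, P (v k) ≠ ∞) :
    ∀ᵐ ω ∂P, eventCount v ω < ∞ :=
  ae_lt_top (measurable_eventCount hv) (by rwa [lintegral_eventCount hv])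

theorem ae_summable_indicator (hv : ∀ k, MeasurableSet (v k)) (hv_sum : ∑' k, P (v k) ≠ ∞) :
    ∀ᵐ ω ∂P, Summable fun k => (v k).indicator (1 : Ω → ℝ) ω := by
  filter_upwards [ae_eventCount_lt_top hv hv_sum] with ω hω
  exact (ENNReal.summable_toReal hω.ne).congr fun k => by by_cases h : ω ∈ v k <;> simp [h]

theorem memLp_toReal_eventCount (hv : ∀ k, MeasurableSet (v k))
    (hvv : ∀ j k, j ≠ k → P (v j ∩ v k) = P (v j) * P (v k)) (hv_sum : ∑' k, P (v k) ≠ ∞) :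
    MemLp (fun ω => (eventCount v ω).toReal) 2 P := by
  have hm := measurable_eventCount hv
  rw [memLp_two_iff_integrable_sq hm.ennreal_toReal.aestronglyMeasurable]
  simp_rw [sq, ← ENNReal.toReal_mul]
  exact integrable_toReal_of_lintegral_ne_top (hm.mul hm).aemeasurable
    (lintegral_eventCount_mul_ne_top hv hv hvv hv_sum hv_sum)

theorem integral_toReal_eventCount (hv : ∀ k, MeasurableSet (v k))
    (hv_sum : ∑' k, P (v k) ≠ ∞) :
    ∫ ω, (eventCount v ω).toReal ∂P = (∑' k, P (v k)).toReal := by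
  rw [integral_toReal (measurable_eventCount hv).aemeasurable (ae_eventCount_lt_top hv hv_sum),
    lintegral_eventCount hv]

theorem integral_toReal_eventCount_mul (hv : ∀ k, MeasurableSet (v k))
    (hw : ∀ k, MeasurableSet (w k)) (hvw : ∀ j k, j ≠ k → P (v j ∩ w k) = P (v j) * P (w k))
    (hv_sum : ∑' k, P (v k) ≠ ∞) (hw_sum : ∑' k, P (w k) ≠ ∞) :
    ∫ ω, (eventCount v ω).toReal * (eventCount w ω).toReal ∂P
      = (∫⁻ ω, eventCount v ω * eventCount w ω ∂P).toReal := by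
  have hm := (measurable_eventCount hv).mul (measurable_eventCount hw)
  simp_rw [← ENNReal.toReal_mul]
  exact integral_toReal hm.aemeasurable
    (ae_lt_top hm (lintegral_eventCount_mul_ne_top hv hw hvw hv_sum hw_sum))

theorem covariance_toReal_eventCount [IsProbabilityMeasure P] (hv : ∀ k, MeasurableSet (v k))
    (hw : ∀ k, MeasurableSet (w k)) (hvv : ∀ j k, j ≠ k → P (v j ∩ v k) = P (v j) * P (v k))
    (hww : ∀ j k, j ≠ k → P (w j ∩ w k) = P (w j) * P (w k))
    (hvw : ∀ j k, j ≠ k → P (v j ∩ w k) = P (v j) * P (w k))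
    (hv_sum : ∑' k, P (v k) ≠ ∞) (hw_sum : ∑' k, P (w k) ≠ ∞) :
    cov[fun ω => (eventCount v ω).toReal, fun ω => (eventCount w ω).toReal; P]
      = ∑' k, (P.real (v k ∩ w k) - P.real (v k) * P.real (w k)) := by
  simp only [measureReal_def]
  have hsplit := lintegral_eventCount_mul_add (P := P) hv hw hvw
  have hdiag := tsum_measure_inter_ne_top (w := w) hv_sum
  have hprod : ∑' k, P (v k) * P (w k) ≠ ∞ := ne_top_of_le_ne_top
    (hsplit ▸ ENNReal.add_ne_top.2 ⟨hdiag, ENNReal.mul_ne_top hv_sum hw_sum⟩) le_add_self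
  have hint := lintegral_eventCount_mul_ne_top hv hw hvw hv_sum hw_sum
  rw [covariance_eq_sub (memLp_toReal_eventCount hv hvv hv_sum)
      (memLp_toReal_eventCount hw hww hw_sum)]
  simp only [Pi.mul_apply]
  rw [integral_toReal_eventCount_mul hv hw hvw hv_sum hw_sum, integral_toReal_eventCount hv hv_sum,
    integral_toReal_eventCount hw hw_sum, (ENNReal.summable_toReal hdiag).tsum_sub
      (by simpa only [ENNReal.toReal_mul] using ENNReal.summable_toReal hprod)]
  have hsplit_real := congrArg ENNReal.toReal hsplit
  rw [ENNReal.toReal_add hint hprod, ENNReal.toReal_add hdiag (ENNReal.mul_ne_top hv_sum hw_sum),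
    ENNReal.toReal_mul, ENNReal.tsum_toReal_eq fun _ => ENNReal.mul_ne_top (measure_ne_top _ _)
      (measure_ne_top _ _), ENNReal.tsum_toReal_eq fun _ => measure_ne_top _ _] at hsplit_real
  simp only [ENNReal.toReal_mul] at hsplit_real
  linarith

end EventCount

theorem one_sub_exp_neg_two_mul_div_two_le (x : ℝ) : (1 - exp (-(2 * x))) / 2 ≤ x := by
  linarith [add_one_le_exp (-(2 * x))]

theorem ProbabilityTheory.IndepFun.measureReal_inter_preimage_eq_mul {Ω β γ : Type*}
    [MeasurableSpace Ω] [MeasurableSpace β] [MeasurableSpace γ] {P : Measure Ω} {X : Ω → β}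
    {Y : Ω → γ} (hXY : IndepFun X Y P) {s : Set β} {t : Set γ} (hs : MeasurableSet s)
    (ht : MeasurableSet t) : P.real (X ⁻¹' s ∩ Y ⁻¹' t) = P.real (X ⁻¹' s) * P.real (Y ⁻¹' t) := by
  simp only [measureReal_def, hXY.measure_inter_preimage_eq_mul s t hs ht, ENNReal.toReal_mul]

section Parity

variable {Ω : Type*} [MeasurableSpace Ω] {P : Measure Ω}

theorem measureReal_odd_of_poisson [IsFiniteMeasure P] {Z : Ω → ℕ} (hZ : Measurable Z) {l : ℝ}
    (h : ∀ j : ℕ, P.real {ω | Z ω = j} = exp (-l) * l ^ j / j !) :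
    P.real {ω | Odd (Z ω)} = (1 - exp (-(2 * l))) / 2 := by
  have hsum : P.real {ω | Odd (Z ω)}
      = ∑' j : ℕ, {j | Odd j}.indicator (fun j => P.real {ω | Z ω = j}) j := by
    have h := congrArg ENNReal.toReal
      (Measure.tsum_indicator_apply_singleton (P.map Z) {j | Odd j} .of_discrete)
    rw [ENNReal.tsum_toReal_eq fun j => by by_cases hj : Odd j <;> simp [hj]] at h
    simp_rw [Measure.map_apply hZ .of_discrete] at h
    rw [measureReal_def, ← Set.preimage_ofPred_eq, ← h]
    exact tsum_congr fun j => by by_cases hj : Odd j <;> simp [hj, measureReal_def, Set.preimage]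
  -- `1{j odd} = (1 - (-1)^j) / 2` turns the sum into two exponential series
  have hexp : HasSum
      (fun j : ℕ => (exp (-l) * (l ^ j / j !) - exp (-l) * ((-l) ^ j / j !)) / 2)
      ((exp (-l) * exp l - exp (-l) * exp (-l)) / 2) := by
    simp only [Real.exp_eq_exp_ℝ]
    exact (((NormedSpace.expSeries_div_hasSum_exp l).mul_left _).sub
      ((NormedSpace.expSeries_div_hasSum_exp (-l)).mul_left _)).div_const 2
  have hterm : ∀ j : ℕ, {j | Odd j}.indicator (fun j => P.real {ω | Z ω = j}) j
      = (exp (-l) * (l ^ j / j !) - exp (-l) * ((-l) ^ j / j !)) / 2 := fun j => by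
    rcases Nat.even_or_odd j with hj | hj
    · simp [hj.neg_pow, Nat.not_odd_iff_even.2 hj]
    · simp [hj.neg_pow, hj, h, mul_div_assoc]; ring
  rw [hsum, tsum_congr hterm, hexp.tsum_eq, ← exp_add, ← exp_add]
  ring_nf
  simp

variable [IsProbabilityMeasure P] {X Y : Ω → ℕ}

theorem measureReal_odd_inter_odd_add (hY : Measurable Y) (hXY : IndepFun X Y P) :
    P.real ({ω | Odd (X ω)} ∩ {ω | Odd (X ω + Y ω)})
      = P.real {ω | Odd (X ω)} * (1 - P.real {ω | Odd (Y ω)}) := by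
  have hset : {ω | Odd (X ω)} ∩ {ω | Odd (X ω + Y ω)}
      = X ⁻¹' {n | Odd n} ∩ Y ⁻¹' {n | Odd n}ᶜ := by
    ext ω
    simp [← Nat.not_even_iff_odd, Nat.even_add]
    tauto
  rw [hset, hXY.measureReal_inter_preimage_eq_mul .of_discrete .of_discrete, Set.preimage_compl,
    probReal_compl_eq_one_sub (hY .of_discrete)]
  rfl

theorem measureReal_odd_add (hX : Measurable X) (hY : Measurable Y) (hXY : IndepFun X Y P) :
    P.real {ω | Odd (X ω + Y ω)} = P.real {ω | Odd (X ω)} * (1 - P.real {ω | Odd (Y ω)})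
      + (1 - P.real {ω | Odd (X ω)}) * P.real {ω | Odd (Y ω)} := by
  have hset : {ω | Odd (X ω + Y ω)} = (X ⁻¹' {n | Odd n} ∩ Y ⁻¹' {n | Odd n}ᶜ)
      ∪ (X ⁻¹' {n | Odd n}ᶜ ∩ Y ⁻¹' {n | Odd n}) := by
    ext ω
    simp [← Nat.not_even_iff_odd, Nat.even_add]
    tauto
  have hdisj : Disjoint (X ⁻¹' {n | Odd n} ∩ Y ⁻¹' {n | Odd n}ᶜ)
      (X ⁻¹' {n | Odd n}ᶜ ∩ Y ⁻¹' {n | Odd n}) :=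
    Set.disjoint_left.2 fun _ h₁ h₂ => h₂.1 h₁.1
  rw [hset, measureReal_union hdisj ((hX .of_discrete).inter (hY .of_discrete)),
    hXY.measureReal_inter_preimage_eq_mul .of_discrete .of_discrete,
    hXY.measureReal_inter_preimage_eq_mul .of_discrete .of_discrete, Set.preimage_compl,
    Set.preimage_compl,
    probReal_compl_eq_one_sub (hX .of_discrete), probReal_compl_eq_one_sub (hY .of_discrete)]
  rfl

theorem measureReal_odd_add_of_poisson (hX : Measurable X) (hY : Measurable Y)
    (hXY : IndepFun X Y P) {a b : ℝ}
    (hXa : ∀ j : ℕ, P.real {ω | X ω = j} = exp (-a) * a ^ j / j !)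
    (hYb : ∀ j : ℕ, P.real {ω | Y ω = j} = exp (-b) * b ^ j / j !) :
    P.real {ω | Odd (X ω + Y ω)} = (1 - exp (-(2 * (a + b)))) / 2 := by
  rw [measureReal_odd_add hX hY hXY, measureReal_odd_of_poisson hX hXa,
    measureReal_odd_of_poisson hY hYb, mul_add, neg_add, exp_add]
  ring

theorem measureReal_odd_inter_odd_add_sub_of_poisson (hX : Measurable X) (hY : Measurable Y)
    (hXY : IndepFun X Y P) {a b : ℝ}
    (hXa : ∀ j : ℕ, P.real {ω | X ω = j} = exp (-a) * a ^ j / j !)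
    (hYb : ∀ j : ℕ, P.real {ω | Y ω = j} = exp (-b) * b ^ j / j !) :
    P.real ({ω | Odd (X ω)} ∩ {ω | Odd (X ω + Y ω)})
        - P.real {ω | Odd (X ω)} * P.real {ω | Odd (X ω + Y ω)}
      = (exp (-(2 * b)) - exp (-(2 * (2 * a + b)))) / 4 := by
  have hexp : exp (-(2 * (2 * a + b))) = exp (-(2 * a)) ^ 2 * exp (-(2 * b)) := by
    rw [← exp_nat_mul, ← exp_add]
    ring_nf
  rw [measureReal_odd_inter_odd_add hY hXY, measureReal_odd_add_of_poisson hX hY hXY hXa hYb,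
    measureReal_odd_of_poisson hX hXa, measureReal_odd_of_poisson hY hYb, hexp, mul_add, neg_add,
    exp_add]
  ring

end Parity

theorem ProbabilityTheory.iIndepFun.measure_inter_preimage_pair_eq_mul {Ω ι α : Type*}
    [MeasurableSpace Ω] [MeasurableSpace α] {P : Measure Ω} {X Y : ι → Ω → α}
    (h : iIndepFun (Sum.elim X Y) P) (hX : ∀ i, Measurable (X i)) (hY : ∀ i, Measurable (Y i))
    {j k : ι} (hjk : j ≠ k) (s u : Set (α × α)) (hs : MeasurableSet s) (hu : MeasurableSet u) :
    P ((fun ω => (X j ω, Y j ω)) ⁻¹' s ∩ (fun ω => (X k ω, Y k ω)) ⁻¹' u)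
      = P ((fun ω => (X j ω, Y j ω)) ⁻¹' s) * P ((fun ω => (X k ω, Y k ω)) ⁻¹' u) :=
  (h.indepFun_prodMk_prodMk (Sum.rec hX hY) (.inl j) (.inr j) (.inl k) (.inr k) (by simpa)
    (by simp) (by simp) (by simpa)).measure_inter_preimage_eq_mul s u hs hu

theorem covariance_odd_occupancy_general
    {Ω : Type*} [MeasurableSpace Ω] (P : Measure Ω) [IsProbabilityMeasure P]
    (p : ℕ → ℝ) (hp_sum : ∑' k, p k = 1)
    (τ t : ℝ)
    (X Y : ℕ → Ω → ℕ) (hX_meas : ∀ k, Measurable (X k)) (hY_meas : ∀ k, Measurable (Y k))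
    (h_indep : iIndepFun (Sum.elim X Y) P)
    (hX : ∀ k, ∀ j : ℕ, (P {ω | X k ω = j}).toReal
      = Real.exp (-(p k * τ)) * (p k * τ) ^ j / j.factorial)
    (hY : ∀ k, ∀ j : ℕ, (P {ω | Y k ω = j}).toReal
      = Real.exp (-(p k * (t - τ))) * (p k * (t - τ)) ^ j / j.factorial)
    (Uτ Ut : Ω → ℝ)
    (hUτ : ∀ ω, Uτ ω = ∑' k, if Odd (X k ω) then (1 : ℝ) else 0)
    (hUt : ∀ ω, Ut ω = ∑' k, if Odd (X k ω + Y k ω) then (1 : ℝ) else 0) :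
    (∀ᵐ ω ∂P, Summable fun k => if Odd (X k ω) then (1 : ℝ) else 0) ∧
    (∀ᵐ ω ∂P, Summable fun k => if Odd (X k ω + Y k ω) then (1 : ℝ) else 0) ∧
    MemLp Uτ 2 P ∧ MemLp Ut 2 P ∧
    (∫ ω, (Uτ ω - ∫ ω', Uτ ω' ∂P) * (Ut ω - ∫ ω', Ut ω' ∂P) ∂P)
      = (1 / 4) * ∑' k, (Real.exp (-(2 * p k * (t - τ)))
          - Real.exp (-(2 * p k * (t + τ)))) := by
  have hp : Summable p := by
    by_contra h
    simp [tsum_eq_zero_of_not_summable h] at hp_sum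
  set A : ℕ → Set Ω := fun k => {ω | Odd (X k ω)}
  set B : ℕ → Set Ω := fun k => {ω | Odd (X k ω + Y k ω)}
  have hA_meas : ∀ k, MeasurableSet (A k) := fun k =>
    hX_meas k (.of_discrete (s := {n | Odd n}))
  have hB_meas : ∀ k, MeasurableSet (B k) := fun k =>
    (hX_meas k).add (hY_meas k) (.of_discrete (s := {n | Odd n}))
  have hpair {j k} (hjk : j ≠ k) (s u : Set (ℕ × ℕ)) :=
    h_indep.measure_inter_preimage_pair_eq_mul hX_meas hY_meas hjk s u .of_discrete .of_discrete
  have hAA {j k} (hjk : j ≠ k) : P (A j ∩ A k) = P (A j) * P (A k) :=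
    hpair hjk {q | Odd q.1} {q | Odd q.1}
  have hBB {j k} (hjk : j ≠ k) : P (B j ∩ B k) = P (B j) * P (B k) :=
    hpair hjk {q | Odd (q.1 + q.2)} {q | Odd (q.1 + q.2)}
  have hAB {j k} (hjk : j ≠ k) : P (A j ∩ B k) = P (A j) * P (B k) :=
    hpair hjk {q | Odd q.1} {q | Odd (q.1 + q.2)}
  have hXY k : IndepFun (X k) (Y k) P := h_indep.indepFun Sum.inl_ne_inr
  have hA_sum : ∑' k, P (A k) ≠ ∞ := tsum_measure_ne_top_of_measureReal_le
    (fun k => (measureReal_odd_of_poisson (hX_meas k) (hX k)).trans_le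
      (one_sub_exp_neg_two_mul_div_two_le _)) (hp.mul_right τ)
  have hB_sum : ∑' k, P (B k) ≠ ∞ := tsum_measure_ne_top_of_measureReal_le
    (fun k => (measureReal_odd_add_of_poisson (hX_meas k) (hY_meas k) (hXY k) (hX k)
      (hY k)).trans_le (one_sub_exp_neg_two_mul_div_two_le _))
    ((hp.mul_right τ).add (hp.mul_right (t - τ)))
  have hUτ_eq : Uτ = fun ω => (eventCount A ω).toReal :=
    funext fun ω => by simp [hUτ, toReal_eventCount, A, Set.indicator_apply]
  have hUt_eq : Ut = fun ω => (eventCount B ω).toReal :=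
    funext fun ω => by simp [hUt, toReal_eventCount, B, Set.indicator_apply]
  subst hUτ_eq hUt_eq
  refine ⟨(ae_summable_indicator hA_meas hA_sum).mono fun ω h => h.congr fun k => ?_,
    (ae_summable_indicator hB_meas hB_sum).mono fun ω h => h.congr fun k => ?_,
    memLp_toReal_eventCount hA_meas (fun _ _ => hAA) hA_sum,
    memLp_toReal_eventCount hB_meas (fun _ _ => hBB) hB_sum, ?_⟩
  · simp [A, Set.indicator_apply]
  · simp [B, Set.indicator_apply]
  change cov[_, _; P] = _
  rw [covariance_toReal_eventCount hA_meas hB_meas (fun _ _ => hAA) (fun _ _ => hBB)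
    (fun _ _ => hAB) hA_sum hB_sum, ← tsum_mul_left]
  refine tsum_congr fun k => (measureReal_odd_inter_odd_add_sub_of_poisson (hX_meas k)
    (hY_meas k) (hXY k) (hX k) (hY k)).trans ?_
  ring_nf

/-- Covariance of the Poissonized odd-occupancy process at times `τ ≤ t`:
`Cov(U(τ), U(t)) = (1/4) ∑_k (e^{−2p_k(t−τ)} − e^{−2p_k(t+τ)})`. -/
theorem covariance_odd_occupancy
    {Ω : Type*} [MeasurableSpace Ω] (P : Measure Ω) [IsProbabilityMeasure P]
    (p : ℕ → ℝ) (hp_pos : ∀ k, 0 < p k) (hp_sum : ∑' k, p k = 1)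
    (τ t : ℝ) (hτ : 0 < τ) (hτt : τ ≤ t)
    (X Y : ℕ → Ω → ℕ) (hX_meas : ∀ k, Measurable (X k)) (hY_meas : ∀ k, Measurable (Y k))
    (h_indep : iIndepFun (Sum.elim X Y) P)
    (hX : ∀ k, ∀ j : ℕ, (P {ω | X k ω = j}).toReal
      = Real.exp (-(p k * τ)) * (p k * τ) ^ j / j.factorial)
    (hY : ∀ k, ∀ j : ℕ, (P {ω | Y k ω = j}).toReal
      = Real.exp (-(p k * (t - τ))) * (p k * (t - τ)) ^ j / j.factorial)
    (Uτ Ut : Ω → ℝ)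
    (hUτ : ∀ ω, Uτ ω = ∑' k, if Odd (X k ω) then (1 : ℝ) else 0)
    (hUt : ∀ ω, Ut ω = ∑' k, if Odd (X k ω + Y k ω) then (1 : ℝ) else 0) :
    (∀ᵐ ω ∂P, Summable fun k => if Odd (X k ω) then (1 : ℝ) else 0) ∧
    (∀ᵐ ω ∂P, Summable fun k => if Odd (X k ω + Y k ω) then (1 : ℝ) else 0) ∧
    MemLp Uτ 2 P ∧ MemLp Ut 2 P ∧
    (∫ ω, (Uτ ω - ∫ ω', Uτ ω' ∂P) * (Ut ω - ∫ ω', Ut ω' ∂P) ∂P)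
      = (1 / 4) * ∑' k, (Real.exp (-(2 * p k * (t - τ)))
          - Real.exp (-(2 * p k * (t + τ)))) :=
  covariance_odd_occupancy_general P p hp_sum τ t X Y hX_meas hY_meas h_indep hX hY Uτ Ut hUτ hUt
end
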